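/- arXiv:2509.10066 — 4 statements merged into one kernel-verified Lean document; each statement's English description precedes it below -/
import Mathlib

section
/- Let 0 < C < 1 and ω = 2/(1+C). Then the equation (1/2)((1−C)ω−2)z·κ⁻¹ + (z²+1−ω) + (1/2)((1+C)ω−2)z·κ = 0 is linear in κ and has the unique solution κ(z) = 2Cz/((C+1)z² + C − 1). Moreover, for every z ∈ ℂ with |z| > 1 one has |κ(z)| < 1, and the continuous extension to the unit circle satisfies κ(1) = 1 and κ(−1) = −1. -/
/-!
For `ω = 2/(1+C)` the coefficient of `κ` vanishes and, after multiplying by `(1+C)κ`, the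
characteristic equation reads `κ · ((C+1)z² + C − 1) = 2Cz`, which has a unique nonzero solution
as soon as `0 < C ≠ 1`. Stability is the reverse triangle inequality: for `r = |z| > 1`,
`|(C+1)z² + C − 1| − 2C r ≥ (C+1)r² − (1−C) − 2C r = (r − 1)((C+1)r + 1 − C) > 0`.
-/

noncomputable section

namespace D1Q2

/-- The left-hand side of the D1Q2 characteristic equation in the spatial root `κ`. -/
def charFun (C ω : ℝ) (z κ : ℂ) : ℂ :=
  (1 / 2 : ℂ) * (((1 - C) * ω - 2 : ℝ) : ℂ) * z * κ⁻¹
    + (z ^ 2 + 1 - (ω : ℂ))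
    + (1 / 2 : ℂ) * (((1 + C) * ω - 2 : ℝ) : ℂ) * z * κ

def stableRoot (C : ℝ) (z : ℂ) : ℂ :=
  2 * (C : ℂ) * z / (((C : ℂ) + 1) * z ^ 2 + (C : ℂ) - 1)

lemma mul_eq_iff_eq_div {K : Type*} [Field K] {κ d a : K} (hκ : κ ≠ 0) (hd : d = 0 → a ≠ 0) :
    κ * d = a ↔ κ = a / d := by
  by_cases h : d = 0
  · simp only [h, mul_zero, div_zero]
    exact ⟨fun ha => absurd ha.symm (hd h), fun h' => absurd h' hκ⟩
  · exact (eq_div_iff h).symm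

lemma charFun_eq {C : ℝ} (hC : 1 + C ≠ 0) (z κ : ℂ) :
    charFun C (2 / (1 + C)) z κ
      = ((((C : ℂ) + 1) * z ^ 2 + C - 1) - 2 * C * z * κ⁻¹) / (1 + C) := by
  have hC' : (1 : ℂ) + C ≠ 0 := by exact_mod_cast hC
  unfold charFun
  push_cast
  field_simp
  ring

lemma charFun_eq_zero_iff {C : ℝ} (hC0 : 0 < C) (hC1 : C ≠ 1) (z : ℂ) {κ : ℂ} (hκ : κ ≠ 0) :
    charFun C (2 / (1 + C)) z κ = 0 ↔ κ = stableRoot C z := by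
  have hC : (1 : ℂ) + C ≠ 0 := by exact_mod_cast (by linarith : 1 + C ≠ 0)
  have hC0' : (C : ℂ) ≠ 0 := by exact_mod_cast hC0.ne'
  have hC1' : (C : ℂ) - 1 ≠ 0 := sub_ne_zero.mpr (by exact_mod_cast hC1)
  rw [charFun_eq (by linarith), div_eq_zero_iff, or_iff_left hC, sub_eq_zero,
    eq_mul_inv_iff_mul_eq₀ hκ, mul_comm]
  refine mul_eq_iff_eq_div hκ fun hD hz => hC1' ?_
  obtain rfl : z = 0 := by simpa [hC0'] using hz
  simpa using hD

lemma norm_two_mul_lt_norm {C : ℝ} (hC0 : 0 ≤ C) (hC1 : C ≤ 1) {z : ℂ} (hz : 1 < ‖z‖) :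
    ‖2 * (C : ℂ) * z‖ < ‖((C : ℂ) + 1) * z ^ 2 + C - 1‖ := by
  have hnum : ‖2 * (C : ℂ) * z‖ = 2 * C * ‖z‖ := by
    simp [Complex.norm_real, abs_of_nonneg hC0]
  have hden : (C + 1) * ‖z‖ ^ 2 - (1 - C) ≤ ‖((C : ℂ) + 1) * z ^ 2 + C - 1‖ := by
    have h := norm_sub_norm_le (((C + 1 : ℝ) : ℂ) * z ^ 2) ((1 - C : ℝ) : ℂ)
    rw [norm_mul, norm_pow, Complex.norm_real, Complex.norm_real, Real.norm_of_nonneg (by linarith),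
      Real.norm_of_nonneg (by linarith)] at h
    refine h.trans_eq (congrArg _ ?_)
    push_cast
    ring
  have hfactor : (C + 1) * ‖z‖ ^ 2 - (1 - C) - 2 * C * ‖z‖
      = (‖z‖ - 1) * ((C + 1) * ‖z‖ + 1 - C) := by ring
  have hpos : 0 < (‖z‖ - 1) * ((C + 1) * ‖z‖ + 1 - C) := mul_pos (by linarith) (by nlinarith)
  linarith

lemma norm_stableRoot_lt_one {C : ℝ} (hC0 : 0 ≤ C) (hC1 : C ≤ 1) {z : ℂ} (hz : 1 < ‖z‖) :
    ‖stableRoot C z‖ < 1 := by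
  have h := norm_two_mul_lt_norm hC0 hC1 hz
  rw [stableRoot, norm_div, div_lt_one ((norm_nonneg _).trans_lt h)]
  exact h

lemma stableRoot_of_sq_eq_one {C : ℝ} (hC0 : C ≠ 0) {z : ℂ} (hz : z ^ 2 = 1) :
    stableRoot C z = z := by
  have hC0' : (C : ℂ) ≠ 0 := by exact_mod_cast hC0
  rw [stableRoot, hz, show ((C : ℂ) + 1) * 1 + C - 1 = 2 * C by ring]
  field_simp

end D1Q2

end

open D1Q2 in
/-- When `ω = 2/(1+C)`, the D1Q2 characteristic equation is linear in `κ`, with unique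
solution `κ(z) = 2Cz/((C+1)z² + C − 1)`; this root is stable (`|κ(z)| < 1` for `|z| > 1`)
and its continuous extension to the unit circle satisfies `κ(1) = 1`, `κ(−1) = −1`. -/
theorem stmt_1 (C : ℝ) (hC0 : 0 < C) (hC1 : C < 1) (ω : ℝ) (hω : ω = 2 / (1 + C)) :
    (∀ z κ : ℂ, κ ≠ 0 →
      ((1 / 2 : ℂ) * (((1 - C) * ω - 2 : ℝ) : ℂ) * z * κ⁻¹
        + (z ^ 2 + 1 - (ω : ℂ))
        + (1 / 2 : ℂ) * (((1 + C) * ω - 2 : ℝ) : ℂ) * z * κ = 0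
        ↔ κ = 2 * (C : ℂ) * z / (((C : ℂ) + 1) * z ^ 2 + (C : ℂ) - 1))) ∧
    (∀ z : ℂ, 1 < ‖z‖ →
      ‖2 * (C : ℂ) * z / (((C : ℂ) + 1) * z ^ 2 + (C : ℂ) - 1)‖ < 1) ∧
    2 * (C : ℂ) * 1 / (((C : ℂ) + 1) * 1 ^ 2 + (C : ℂ) - 1) = 1 ∧
    2 * (C : ℂ) * (-1) / (((C : ℂ) + 1) * (-1) ^ 2 + (C : ℂ) - 1) = -1 := by
  subst hω
  exact ⟨fun z κ hκ => charFun_eq_zero_iff hC0 hC1.ne z hκ,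
    fun z hz => norm_stableRoot_lt_one hC0.le hC1.le hz,
    stableRoot_of_sq_eq_one hC0.ne' (one_pow 2),
    stableRoot_of_sq_eq_one hC0.ne' (by norm_num)⟩
end

section
/- Let C ∈ ℝ with C ≠ 0 and ω ∈ (0, 2), and assume |C| ≤ 1. Then all four roots of the polynomial φ(z) = (ω−1)²z⁴ + ((C²−1)ω² + 2ω − 2)z² + 1 satisfy |z| > 1. If instead ω = 2 and |C| < 1, then all roots of φ satisfy |z| = 1. -/
/-!
With `w = z²`, `φ(z) = a w² + b w + 1` where `a = (ω - 1)²` and `b = (C² - 1)ω² + 2ω - 2`, and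
`w⁻¹` is a root of the monic reversed polynomial `u² + b u + a`. Jury's criterion `|a| < 1`,
`|b| < 1 + a` places its roots in the open unit disk: here `1 + a + b = C²ω²` and
`1 + a - b = (2 - ω)² + (1 - C²)ω²`. For `ω = 2` the polynomial `u² + (4C² - 2)u + 1` has
discriminant `16C²(C² - 1) < 0`, so its roots are conjugate with product `1`.
-/

open ComplexConjugate

/-- The other root `s = -b - r` has `r s = a`, so `|s| < 1` if `|r| ≥ 1`; then
`p(1) p(-1) = (1 - r²)(1 - s²) ≤ 0`, contradicting `p(±1) = 1 + a ± b > 0`. -/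
lemma abs_lt_one_of_sq_add_mul_add_eq_zero {a b r : ℝ} (ha : |a| < 1) (hb : |b| < 1 + a)
    (hr : r ^ 2 + b * r + a = 0) : |r| < 1 := by
  by_contra! hr1
  set s := -b - r
  have hrs : r * s = a := by linear_combination -hr
  have hs : |s| < 1 := by
    by_contra! hs1
    have : 1 ≤ |r| * |s| := one_le_mul_of_one_le_of_one_le hr1 hs1
    rw [← abs_mul, hrs] at this
    linarith
  have hp_one : 0 < (1 - r) * (1 - s) := by
    have : (1 - r) * (1 - s) = 1 + b + a := by linear_combination hrs
    rw [this]; linarith [neg_abs_le b]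
  have hp_neg_one : 0 < (1 + r) * (1 + s) := by
    have : (1 + r) * (1 + s) = 1 - b + a := by linear_combination hrs
    rw [this]; linarith [le_abs_self b]
  have hr2 : 1 ≤ r ^ 2 := by rw [← sq_abs]; nlinarith
  have hs2 : s ^ 2 < 1 := by rw [← sq_abs]; nlinarith [abs_nonneg s]
  nlinarith [mul_pos hp_one hp_neg_one]

/-- A non-real root of a real monic quadratic has its conjugate as the other root, so its
squared modulus is the product of the roots. -/
lemma Complex.normSq_eq_of_sq_add_mul_add_eq_zero {a b : ℝ} {u : ℂ}
    (hu : u ^ 2 + b * u + a = 0) (him : u.im ≠ 0) : normSq u = a := by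
  have hconj : conj u ^ 2 + b * conj u + a = 0 := by
    simpa using congrArg conj hu
  have hne : u - conj u ≠ 0 := by
    rw [sub_ne_zero]
    exact fun h => him (conj_eq_iff_im.mp h.symm)
  have hsum : u + conj u + b = 0 := by
    apply (mul_eq_zero.mp (_ : (u - conj u) * (u + conj u + b) = 0)).resolve_left hne
    linear_combination hu - hconj
  have : u * conj u = a := by linear_combination u * hsum - hu
  rw [mul_conj] at this
  exact_mod_cast this

lemma Complex.im_ne_zero_of_sq_add_mul_add_eq_zero {a b : ℝ} {u : ℂ}
    (hu : u ^ 2 + b * u + a = 0) (hdisc : b ^ 2 < 4 * a) : u.im ≠ 0 := by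
  intro him
  have hre : u.re ^ 2 + b * u.re + a = 0 := by
    have hu_re : u = u.re := ext rfl (by simpa using him)
    rw [hu_re] at hu
    exact_mod_cast hu
  nlinarith [sq_nonneg (2 * u.re + b)]

lemma Complex.norm_lt_one_of_sq_add_mul_add_eq_zero {a b : ℝ} (ha : |a| < 1)
    (hb : |b| < 1 + a) {u : ℂ} (hu : u ^ 2 + b * u + a = 0) : ‖u‖ < 1 := by
  by_cases him : u.im = 0
  · have hu_re : u = u.re := ext rfl (by simpa using him)
    rw [hu_re] at hu ⊢
    rw [norm_real, Real.norm_eq_abs]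
    exact abs_lt_one_of_sq_add_mul_add_eq_zero ha hb (by exact_mod_cast hu)
  · have := normSq_eq_of_sq_add_mul_add_eq_zero hu him
    rw [normSq_eq_norm_sq] at this
    have : ‖u‖ ^ 2 < 1 := by linarith [le_abs_self a]
    exact (sq_lt_one_iff₀ (norm_nonneg u)).mp this

lemma inv_sq_add_mul_inv_add_eq_zero {K : Type*} [Field K] {a b w : K}
    (hw : a * w ^ 2 + b * w + 1 = 0) : w⁻¹ ^ 2 + b * w⁻¹ + a = 0 := by
  have hw0 : w ≠ 0 := by rintro rfl; simp at hw
  field_simp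
  linear_combination hw

/-- Location of the roots of the radicand polynomial
`φ(z) = (ω−1)²z⁴ + ((C²−1)ω² + 2ω − 2)z² + 1` of the D1Q2 scheme: for `ω ∈ (0,2)` and
`|C| ≤ 1` all roots are strictly outside the closed unit disk; for `ω = 2` and `|C| < 1`
all roots are on the unit circle. -/
theorem stmt_7 (C : ℝ) (hC : C ≠ 0) :
    (∀ ω : ℝ, 0 < ω → ω < 2 → |C| ≤ 1 → ∀ z : ℂ,
      (((ω - 1) ^ 2 : ℝ) : ℂ) * z ^ 4
        + (((C ^ 2 - 1) * ω ^ 2 + 2 * ω - 2 : ℝ) : ℂ) * z ^ 2 + 1 = 0 →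
      1 < ‖z‖) ∧
    (|C| < 1 → ∀ z : ℂ,
      ((((2 : ℝ) - 1) ^ 2 : ℝ) : ℂ) * z ^ 4
        + (((C ^ 2 - 1) * 2 ^ 2 + 2 * 2 - 2 : ℝ) : ℂ) * z ^ 2 + 1 = 0 →
      ‖z‖ = 1) := by
  constructor
  · intro ω hω0 hω2 hC1 z hz
    have hC2 : 0 < C ^ 2 := by positivity
    have hC1' : C ^ 2 ≤ 1 := by rw [← sq_abs]; nlinarith [abs_nonneg C]
    have hroot := inv_sq_add_mul_inv_add_eq_zero (a := (((ω - 1) ^ 2 : ℝ) : ℂ))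
      (b := (((C ^ 2 - 1) * ω ^ 2 + 2 * ω - 2 : ℝ) : ℂ)) (w := z ^ 2) (by linear_combination hz)
    have hinv := Complex.norm_lt_one_of_sq_add_mul_add_eq_zero ?_ ?_ hroot
    · have hz0 : z ≠ 0 := by rintro rfl; simp at hz
      rw [norm_inv, norm_pow, inv_lt_one₀ (by positivity)] at hinv
      exact (one_lt_sq_iff₀ (norm_nonneg z)).mp hinv
    · rw [abs_of_nonneg (sq_nonneg _)]
      nlinarith
    · rw [abs_lt]
      constructor
      · nlinarith [mul_pos hC2 (pow_pos hω0 2)]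
      · nlinarith [mul_nonneg (sub_nonneg.2 hC1') (sq_nonneg ω)]
  · intro hC1 z hz
    have hC1' : C ^ 2 < 1 := by rw [← sq_abs]; nlinarith [abs_nonneg C]
    have hroot : (z ^ 2) ^ 2 + ((4 * C ^ 2 - 2 : ℝ) : ℂ) * z ^ 2 + (1 : ℝ) = 0 := by
      push_cast at hz ⊢; linear_combination hz
    have hdisc : (4 * C ^ 2 - 2) ^ 2 < 4 * 1 := by nlinarith [mul_pos (sq_pos_of_ne_zero hC) (sub_pos.2 hC1')]
    have hnorm := Complex.normSq_eq_of_sq_add_mul_add_eq_zero hroot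
      (Complex.im_ne_zero_of_sq_add_mul_add_eq_zero hroot hdisc)
    rw [Complex.normSq_eq_norm_sq, norm_pow, ← pow_mul] at hnorm
    exact (pow_eq_one_iff_of_nonneg (norm_nonneg z) (by norm_num)).mp hnorm
end

section
/- Let 0 < C < 1/2 and set Π̃(C) = (4C²−1)(C²−1). Then Π̃(C) > 0, and the two real numbers θ_I = arctan(√(4(1−C²)√Π̃(C) − 8C⁴ + 13C² + 4) / (2(1−C²) − √Π̃(C))) and θ_II = arctan(√(−4(1−C²)√Π̃(C) − 8C⁴ + 13C² + 4) / (2(1−C²) + √Π̃(C))) are well defined, with both radicands nonnegative, and the four complex numbers ζ = (2/3)(1−C²) ∓ (1/3)√Π̃(C) ± (i/3)√(±4(1−C²)√Π̃(C) − 8C⁴ + 13C² + 4) all have modulus 1. -/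
/-- `Π̃(C) = (4C²−1)(C²−1)`. -/
noncomputable def Ptil (C : ℝ) : ℝ := (4 * C ^ 2 - 1) * (C ^ 2 - 1)

/-- Radicand appearing in `θ_I`. -/
noncomputable def rad₁ (C : ℝ) : ℝ :=
  4 * (1 - C ^ 2) * Real.sqrt (Ptil C) - 8 * C ^ 4 + 13 * C ^ 2 + 4

/-- Radicand appearing in `θ_II`. -/
noncomputable def rad₂ (C : ℝ) : ℝ :=
  -4 * (1 - C ^ 2) * Real.sqrt (Ptil C) - 8 * C ^ 4 + 13 * C ^ 2 + 4

/-!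
Write `s = √Π̃(C)` and `q = −8C⁴ + 13C² + 4`. For `C² < 1/4` both factors of `Π̃(C)` are
negative and `q > 0`, so `rad₁ = 4(1−C²)s + q ≥ 0`; for `rad₂ = q − 4(1−C²)s` one uses
`q² − 16(1−C²)² Π̃(C) = 27C²(8 − 5C²) ≥ 0`. The modulus of each branch point is 1 because
`(2(1−C²) ∓ s)² + q ± 4(1−C²)s = 4(1−C²)² + Π̃(C) + q = 9`: the cross terms cancel.
-/

open Complex

lemma norm_ofReal_add_ofReal_mul_I_eq_one {a b : ℝ} (h : a ^ 2 + b ^ 2 = 1) :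
    ‖(a : ℂ) + (b : ℂ) * I‖ = 1 := by
  rw [norm_add_mul_I, h, Real.sqrt_one]

lemma norm_ofReal_sub_ofReal_mul_I_eq_one {a b : ℝ} (h : a ^ 2 + b ^ 2 = 1) :
    ‖(a : ℂ) - (b : ℂ) * I‖ = 1 := by
  have hconj : (a : ℂ) - (b : ℂ) * I = (a : ℂ) + ((-b : ℝ) : ℂ) * I := by
    push_cast
    ring
  rw [hconj]
  exact norm_ofReal_add_ofReal_mul_I_eq_one (by rwa [neg_sq])

section Radicands

variable {C : ℝ}

lemma Ptil_pos_of_sq_lt (hC : C ^ 2 < 1 / 4) : 0 < Ptil C := by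
  unfold Ptil
  nlinarith

lemma rad₁_nonneg_of_sq_lt (hC : C ^ 2 < 1 / 4) : 0 ≤ rad₁ C := by
  have hs : 0 ≤ Real.sqrt (Ptil C) := Real.sqrt_nonneg _
  unfold rad₁
  nlinarith [sq_nonneg C]

lemma sq_sub_sq_mul_Ptil (C : ℝ) :
    (-8 * C ^ 4 + 13 * C ^ 2 + 4) ^ 2 - (4 * (1 - C ^ 2)) ^ 2 * Ptil C
      = 27 * C ^ 2 * (8 - 5 * C ^ 2) := by
  unfold Ptil
  ring

lemma rad₂_nonneg_of_sq_lt (hC : C ^ 2 < 1 / 4) : 0 ≤ rad₂ C := by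
  set s := Real.sqrt (Ptil C)
  have hs : s ^ 2 = Ptil C := Real.sq_sqrt (Ptil_pos_of_sq_lt hC).le
  have hq : 0 < -8 * C ^ 4 + 13 * C ^ 2 + 4 := by nlinarith [sq_nonneg C]
  have hp : 0 ≤ 4 * (1 - C ^ 2) * s := by
    have : 0 ≤ s := Real.sqrt_nonneg _
    have : 0 ≤ 1 - C ^ 2 := by linarith
    positivity
  have hsq : (4 * (1 - C ^ 2) * s) ^ 2 ≤ (-8 * C ^ 4 + 13 * C ^ 2 + 4) ^ 2 := by
    have h8 : 0 ≤ 8 - 5 * C ^ 2 := by linarith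
    have hgap : 0 ≤ 27 * C ^ 2 * (8 - 5 * C ^ 2) := by positivity
    rw [mul_pow, hs]
    linarith [sq_sub_sq_mul_Ptil C]
  have hle : 4 * (1 - C ^ 2) * s ≤ -8 * C ^ 4 + 13 * C ^ 2 + 4 :=
    (pow_le_pow_iff_left₀ hp hq.le two_ne_zero).1 hsq
  unfold rad₂
  linarith

lemma sq_add_sq_rad₁ (hP : 0 ≤ Ptil C) (hr : 0 ≤ rad₁ C) :
    (2 / 3 * (1 - C ^ 2) - Real.sqrt (Ptil C) / 3) ^ 2 + (Real.sqrt (rad₁ C) / 3) ^ 2 = 1 := by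
  have hs := Real.sq_sqrt hP
  rw [div_pow, Real.sq_sqrt hr, rad₁]
  unfold Ptil at hs ⊢
  linear_combination hs / 9

lemma sq_add_sq_rad₂ (hP : 0 ≤ Ptil C) (hr : 0 ≤ rad₂ C) :
    (2 / 3 * (1 - C ^ 2) + Real.sqrt (Ptil C) / 3) ^ 2 + (Real.sqrt (rad₂ C) / 3) ^ 2 = 1 := by
  have hs := Real.sq_sqrt hP
  rw [div_pow, Real.sq_sqrt hr, rad₂]
  unfold Ptil at hs ⊢
  linear_combination hs / 9

end Radicands

/-- For `0 < C < 1/2`: `Π̃(C) > 0`, both radicands are nonnegative (so `θ_I`, `θ_II` are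
well defined), and the four branch points
`(2/3)(1−C²) ∓ (1/3)√Π̃(C) ± (i/3)√(±4(1−C²)√Π̃(C) − 8C⁴ + 13C² + 4)` all have modulus 1. -/
theorem stmt_11 (C : ℝ) (h0 : 0 < C) (h1 : C < 1 / 2) :
    0 < Ptil C ∧ 0 ≤ rad₁ C ∧ 0 ≤ rad₂ C ∧
    ‖((2 / 3 * (1 - C ^ 2) - Real.sqrt (Ptil C) / 3 : ℝ) : ℂ)
        + ((Real.sqrt (rad₁ C) / 3 : ℝ) : ℂ) * Complex.I‖ = 1 ∧
    ‖((2 / 3 * (1 - C ^ 2) - Real.sqrt (Ptil C) / 3 : ℝ) : ℂ)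
        - ((Real.sqrt (rad₁ C) / 3 : ℝ) : ℂ) * Complex.I‖ = 1 ∧
    ‖((2 / 3 * (1 - C ^ 2) + Real.sqrt (Ptil C) / 3 : ℝ) : ℂ)
        + ((Real.sqrt (rad₂ C) / 3 : ℝ) : ℂ) * Complex.I‖ = 1 ∧
    ‖((2 / 3 * (1 - C ^ 2) + Real.sqrt (Ptil C) / 3 : ℝ) : ℂ)
        - ((Real.sqrt (rad₂ C) / 3 : ℝ) : ℂ) * Complex.I‖ = 1 := by
  have hC : C ^ 2 < 1 / 4 := by nlinarith
  have hP := Ptil_pos_of_sq_lt hC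
  have hr₁ := rad₁_nonneg_of_sq_lt hC
  have hr₂ := rad₂_nonneg_of_sq_lt hC
  have e₁ := sq_add_sq_rad₁ hP.le hr₁
  have e₂ := sq_add_sq_rad₂ hP.le hr₂
  exact ⟨hP, hr₁, hr₂,
    norm_ofReal_add_ofReal_mul_I_eq_one e₁, norm_ofReal_sub_ofReal_mul_I_eq_one e₁,
    norm_ofReal_add_ofReal_mul_I_eq_one e₂, norm_ofReal_sub_ofReal_mul_I_eq_one e₂⟩
end

section
/- Let N ≥ 1, let A ∈ ℝ^{N×N} be diagonalizable with real eigenvalues a₁, …, a_N, let λ > 0, ω ∈ ℝ, and set C_k = a_k/λ. Define the 2N×2N matrix-valued Laurent polynomial E(κ) with N×N blocks E₁₁ = (1/2)(κ⁻¹+κ)I + (ω/(2λ))(κ⁻¹−κ)A, E₁₂ = ((1−ω)/2)(κ⁻¹−κ)I, E₂₁ = (1/2)(κ⁻¹−κ)I + (ω/(2λ))(κ⁻¹+κ)A, E₂₂ = ((1−ω)/2)(κ⁻¹+κ)I. Then for every z ∈ ℂ and κ ∈ ℂ \ {0}: det(zI₂N − E(κ)) = Π_{k=1}^{N} [ (1/2)((1−C_k)ω−2)z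 κ⁻¹ + (z² + 1 − ω) + (1/2)((1+C_k)ω−2)z κ ]. -/
/-!
Write `A = R D R⁻¹` with `D = diag a`. Every block of `z I - E(κ)` has the form `α I + β A`, so
conjugating by `diag(R, R)` turns all four blocks into diagonal matrices `diag(α + β a_k)`. After
reordering the basis as `(e_k, f_k)_k`, a block matrix with diagonal blocks is block diagonal with
`2 × 2` blocks, and its determinant is the product of the `2 × 2` determinants, which are the scalar
D1Q2 characteristic polynomials (using `κ⁻¹ κ = 1`).
-/

open Matrix

section BlockDeterminants

variable {n K : Type*} [Fintype n] [DecidableEq n] [CommRing K]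

theorem det_fromBlocks_diagonal (d₁₁ d₁₂ d₂₁ d₂₂ : n → K) :
    (fromBlocks (diagonal d₁₁) (diagonal d₁₂) (diagonal d₂₁) (diagonal d₂₂)).det
      = ∏ k, (d₁₁ k * d₂₂ k - d₁₂ k * d₂₁ k) := by
  let e : n ⊕ n ≃ Fin 2 × n :=
    (Equiv.boolProdEquivSum n).symm.trans (finTwoEquiv.symm.prodCongr (Equiv.refl n))
  have h : fromBlocks (diagonal d₁₁) (diagonal d₁₂) (diagonal d₂₁) (diagonal d₂₂)
      = (blockDiagonal fun k => !![d₁₁ k, d₁₂ k; d₂₁ k, d₂₂ k]).submatrix e e := by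
    ext (i | i) (j | j) <;> simp [e, blockDiagonal_apply, diagonal_apply, finTwoEquiv]
  rw [h, det_submatrix_equiv_self, det_blockDiagonal]
  simp [det_fin_two_of]

theorem det_fromBlocks_conj {P : Matrix n n K} (hP : IsUnit P.det)
    (B₁₁ B₁₂ B₂₁ B₂₂ : Matrix n n K) :
    (fromBlocks (P * B₁₁ * P⁻¹) (P * B₁₂ * P⁻¹) (P * B₂₁ * P⁻¹) (P * B₂₂ * P⁻¹)).det
      = (fromBlocks B₁₁ B₁₂ B₂₁ B₂₂).det := by
  have hS : IsUnit (fromBlocks P 0 0 P) := by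
    rw [isUnit_iff_isUnit_det, det_fromBlocks_zero₂₁]
    exact hP.mul hP
  have hS_inv : (fromBlocks P 0 0 P)⁻¹ = fromBlocks P⁻¹ 0 0 P⁻¹ := by
    refine inv_eq_right_inv ?_
    simp [fromBlocks_multiply, mul_nonsing_inv _ hP]
  have hconj : fromBlocks (P * B₁₁ * P⁻¹) (P * B₁₂ * P⁻¹) (P * B₂₁ * P⁻¹) (P * B₂₂ * P⁻¹)
      = fromBlocks P 0 0 P * fromBlocks B₁₁ B₁₂ B₂₁ B₂₂ * (fromBlocks P 0 0 P)⁻¹ := by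
    simp [hS_inv, fromBlocks_multiply]
  rw [hconj, det_conj hS]

theorem smul_one_add_smul_conj_diagonal {P : Matrix n n K} (hP : IsUnit P.det)
    (d : n → K) (α β : K) :
    α • (1 : Matrix n n K) + β • (P * diagonal d * P⁻¹)
      = P * diagonal (fun k => α + β * d k) * P⁻¹ := by
  have hd : diagonal (fun k => α + β * d k) = α • 1 + β • diagonal d := by
    ext i j; by_cases h : i = j <;> simp [h]
  rw [hd, Matrix.mul_add, Matrix.add_mul, Matrix.mul_smul, Matrix.smul_mul, Matrix.mul_one,
    mul_nonsing_inv _ hP, Matrix.mul_smul, Matrix.smul_mul]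

theorem det_fromBlocks_smul_one_add_smul_of_eq_conj_diagonal {A P : Matrix n n K}
    (hP : IsUnit P.det) {d : n → K} (hA : A = P * diagonal d * P⁻¹)
    (α₁₁ α₁₂ α₂₁ α₂₂ β₁₁ β₁₂ β₂₁ β₂₂ : K) :
    (fromBlocks (α₁₁ • 1 + β₁₁ • A) (α₁₂ • 1 + β₁₂ • A)
        (α₂₁ • 1 + β₂₁ • A) (α₂₂ • 1 + β₂₂ • A)).det
      = ∏ k, ((α₁₁ + β₁₁ * d k) * (α₂₂ + β₂₂ * d k)
          - (α₁₂ + β₁₂ * d k) * (α₂₁ + β₂₁ * d k)) := by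
  simp only [hA, smul_one_add_smul_conj_diagonal hP, det_fromBlocks_conj hP,
    det_fromBlocks_diagonal]

end BlockDeterminants

theorem stmt_17_general (N : ℕ)
    (A : Matrix (Fin N) (Fin N) ℝ) (a : Fin N → ℝ)
    (R : Matrix (Fin N) (Fin N) ℝ) (hR : IsUnit R.det)
    (hA : A = R * Matrix.diagonal a * R⁻¹)
    (lam ω : ℝ)
    (Ck : Fin N → ℝ) (hCk : ∀ k, Ck k = a k / lam)
    (E : ℂ → Matrix (Fin N ⊕ Fin N) (Fin N ⊕ Fin N) ℂ)
    (hE : ∀ κ : ℂ, E κ = Matrix.fromBlocks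
      (((1 / 2 : ℂ) * (κ⁻¹ + κ)) • (1 : Matrix (Fin N) (Fin N) ℂ)
        + (((ω / (2 * lam) : ℝ) : ℂ) * (κ⁻¹ - κ)) • A.map (Complex.ofReal))
      (((((1 - ω) / 2 : ℝ) : ℂ) * (κ⁻¹ - κ)) • (1 : Matrix (Fin N) (Fin N) ℂ))
      (((1 / 2 : ℂ) * (κ⁻¹ - κ)) • (1 : Matrix (Fin N) (Fin N) ℂ)
        + (((ω / (2 * lam) : ℝ) : ℂ) * (κ⁻¹ + κ)) • A.map (Complex.ofReal))
      (((((1 - ω) / 2 : ℝ) : ℂ) * (κ⁻¹ + κ)) • (1 : Matrix (Fin N) (Fin N) ℂ))) :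
    ∀ (z κ : ℂ), κ ≠ 0 →
      (z • (1 : Matrix (Fin N ⊕ Fin N) (Fin N ⊕ Fin N) ℂ) - E κ).det
        = ∏ k : Fin N,
            ((1 / 2 : ℂ) * (((1 - Ck k) * ω - 2 : ℝ) : ℂ) * z * κ⁻¹
              + (z ^ 2 + 1 - (ω : ℂ))
              + (1 / 2 : ℂ) * (((1 + Ck k) * ω - 2 : ℝ) : ℂ) * z * κ) := by
  intro z κ hκ
  have hmap_mul : ∀ M M' : Matrix (Fin N) (Fin N) ℝ,
      (M * M').map Complex.ofReal = M.map Complex.ofReal * M'.map Complex.ofReal :=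
    fun _ _ => Matrix.map_mul (f := Complex.ofRealHom)
  set Rc := R.map Complex.ofReal
  have hR_inv : (R⁻¹).map Complex.ofReal = Rc⁻¹ := by
    refine (inv_eq_left_inv ?_).symm
    rw [← hmap_mul, nonsing_inv_mul _ hR]
    exact Matrix.map_one _ Complex.ofReal_zero Complex.ofReal_one
  have hRc : IsUnit Rc.det := (RingHom.map_det Complex.ofRealHom R) ▸ hR.map _
  have hAc : A.map Complex.ofReal = Rc * diagonal (fun k => (a k : ℂ)) * Rc⁻¹ := by
    rw [hA, hmap_mul, hmap_mul, hR_inv, diagonal_map Complex.ofReal_zero]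
  set c : ℂ := ((ω / (2 * lam) : ℝ) : ℂ)
  set w : ℂ := (((1 - ω) / 2 : ℝ) : ℂ)
  have hblocks : z • (1 : Matrix (Fin N ⊕ Fin N) (Fin N ⊕ Fin N) ℂ) - E κ
      = fromBlocks
        ((z - 1 / 2 * (κ⁻¹ + κ)) • 1 + (-(c * (κ⁻¹ - κ))) • A.map Complex.ofReal)
        ((-(w * (κ⁻¹ - κ))) • 1 + (0 : ℂ) • A.map Complex.ofReal)
        ((-(1 / 2 * (κ⁻¹ - κ))) • 1 + (-(c * (κ⁻¹ + κ))) • A.map Complex.ofReal)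
        ((z - w * (κ⁻¹ + κ)) • 1 + (0 : ℂ) • A.map Complex.ofReal) := by
    rw [hE κ, ← fromBlocks_one, fromBlocks_smul, sub_eq_add_neg, fromBlocks_neg,
      fromBlocks_add, fromBlocks_inj]
    refine ⟨by module, by module, by module, by module⟩
  rw [hblocks, det_fromBlocks_smul_one_add_smul_of_eq_conj_diagonal hRc hAc]
  refine Finset.prod_congr rfl fun k _ => ?_
  have hκκ : κ⁻¹ * κ = 1 := inv_mul_cancel₀ hκ
  simp only [c, w, hCk k]
  push_cast
  linear_combination ((1 : ℂ) - (ω : ℂ)) * hκκ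

/-- Factorization of the characteristic polynomial of the symbol of the vectorial
`D1Q2^N` lattice Boltzmann scheme for `∂_t u + A ∂_x u = 0`: it is the product of the
scalar D1Q2 characteristic polynomials, one per characteristic speed `a_k`. -/
theorem stmt_17 (N : ℕ) (hN : 1 ≤ N)
    (A : Matrix (Fin N) (Fin N) ℝ) (a : Fin N → ℝ)
    (R : Matrix (Fin N) (Fin N) ℝ) (hR : IsUnit R.det)
    (hA : A = R * Matrix.diagonal a * R⁻¹)
    (lam ω : ℝ) (hlam : 0 < lam)
    (Ck : Fin N → ℝ) (hCk : ∀ k, Ck k = a k / lam)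
    (E : ℂ → Matrix (Fin N ⊕ Fin N) (Fin N ⊕ Fin N) ℂ)
    (hE : ∀ κ : ℂ, E κ = Matrix.fromBlocks
      (((1 / 2 : ℂ) * (κ⁻¹ + κ)) • (1 : Matrix (Fin N) (Fin N) ℂ)
        + (((ω / (2 * lam) : ℝ) : ℂ) * (κ⁻¹ - κ)) • A.map (Complex.ofReal))
      (((((1 - ω) / 2 : ℝ) : ℂ) * (κ⁻¹ - κ)) • (1 : Matrix (Fin N) (Fin N) ℂ))
      (((1 / 2 : ℂ) * (κ⁻¹ - κ)) • (1 : Matrix (Fin N) (Fin N) ℂ)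
        + (((ω / (2 * lam) : ℝ) : ℂ) * (κ⁻¹ + κ)) • A.map (Complex.ofReal))
      (((((1 - ω) / 2 : ℝ) : ℂ) * (κ⁻¹ + κ)) • (1 : Matrix (Fin N) (Fin N) ℂ))) :
    ∀ (z κ : ℂ), κ ≠ 0 →
      (z • (1 : Matrix (Fin N ⊕ Fin N) (Fin N ⊕ Fin N) ℂ) - E κ).det
        = ∏ k : Fin N,
            ((1 / 2 : ℂ) * (((1 - Ck k) * ω - 2 : ℝ) : ℂ) * z * κ⁻¹
              + (z ^ 2 + 1 - (ω : ℂ))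
              + (1 / 2 : ℂ) * (((1 + Ck k) * ω - 2 : ℝ) : ℂ) * z * κ) :=
  stmt_17_general N A a R hR hA lam ω Ck hCk E hE
end
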